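/- Let M be a metric space, n, k, z ∈ ℕ with z < n and k ≥ 1, μ ∈ (0,1), and let x, y : Fin n → M be two families of points. Let r_opt be the infimum of cost_z(x, H) over all nonempty finite sets H ⊆ M with |H| = k. Suppose d(x_i, y_i) ≤ μ·r_opt for every i ∈ Fin n. Then for every nonempty finite set H ⊆ M with |H| = k, (1 − μ)·cost_z(x, H) ≤ cost_z(y, H) ≤ (1 + μ)·cost_z(x, H); that is, y is a μ-coreset of x for k-center clustering with z outliers. -/

import Mathlib

/-!
Moving every point by at most `δ` changes every feasible radius by at most `δ` (triangle
inequality), so `|cost_z(y,H) - cost_z(x,H)| ≤ δ`. With `δ = μ·r_opt` and `r_opt ≤ cost_z(x,H)`,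
the additive error `δ` is at most the relative error `μ·cost_z(x,H)`.
-/

/-- The `k`-center clustering cost with `z` outliers of the point family `x : Fin n → M`
with respect to the center set `H`: the minimum over subsets `I ⊆ Fin n` with
`|I| ≥ n - z` of `max_{i ∈ I} min_{c ∈ H} dist (x i) c`, expressed as the infimum
of all feasible radii. -/
noncomputable def kCenterCost {M : Type*} [MetricSpace M] (n z : ℕ)
    (x : Fin n → M) (H : Finset M) : ℝ :=
  sInf {r : ℝ | ∃ I : Finset (Fin n), n - z ≤ I.card ∧ ∀ i ∈ I, ∃ c ∈ H, dist (x i) c ≤ r}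

namespace KCenter

variable {M : Type*} [MetricSpace M] {n z : ℕ}

def feasibleRadii (n z : ℕ) (x : Fin n → M) (H : Finset M) : Set ℝ :=
  {r | ∃ I : Finset (Fin n), n - z ≤ I.card ∧ ∀ i ∈ I, ∃ c ∈ H, dist (x i) c ≤ r}

theorem kCenterCost_eq_sInf (x : Fin n → M) (H : Finset M) :
    kCenterCost n z x H = sInf (feasibleRadii n z x H) :=
  rfl

theorem nonneg_of_mem_feasibleRadii (hz : z < n) {x : Fin n → M} {H : Finset M} {r : ℝ}
    (hr : r ∈ feasibleRadii n z x H) : 0 ≤ r := by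
  obtain ⟨I, hI, hcover⟩ := hr
  obtain ⟨i, hi⟩ : I.Nonempty := Finset.card_pos.mp (by omega)
  obtain ⟨c, -, hc⟩ := hcover i hi
  exact dist_nonneg.trans hc

theorem bddBelow_feasibleRadii (hz : z < n) (x : Fin n → M) (H : Finset M) :
    BddBelow (feasibleRadii n z x H) :=
  ⟨0, fun _ ↦ nonneg_of_mem_feasibleRadii hz⟩

theorem kCenterCost_nonneg (hz : z < n) (x : Fin n → M) (H : Finset M) :
    0 ≤ kCenterCost n z x H :=
  Real.sInf_nonneg fun _ ↦ nonneg_of_mem_feasibleRadii hz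

theorem feasibleRadii_nonempty (hz : z < n) (x : Fin n → M) {H : Finset M}
    (hH : H.Nonempty) : (feasibleRadii n z x H).Nonempty := by
  obtain ⟨c, hc⟩ := hH
  have : Nonempty (Fin n) := ⟨⟨0, by omega⟩⟩
  refine ⟨Finset.univ.sup' Finset.univ_nonempty (fun i ↦ dist (x i) c), Finset.univ, ?_,
    fun i _ ↦ ⟨c, hc, Finset.le_sup' (fun i ↦ dist (x i) c) (Finset.mem_univ i)⟩⟩
  simp

theorem add_mem_feasibleRadii {x y : Fin n → M} {H : Finset M} {r δ : ℝ}
    (hr : r ∈ feasibleRadii n z x H) (hxy : ∀ i, dist (x i) (y i) ≤ δ) :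
    r + δ ∈ feasibleRadii n z y H := by
  obtain ⟨I, hI, hcover⟩ := hr
  refine ⟨I, hI, fun i hi ↦ ?_⟩
  obtain ⟨c, hc, hxc⟩ := hcover i hi
  refine ⟨c, hc, ?_⟩
  calc dist (y i) c ≤ dist (y i) (x i) + dist (x i) c := dist_triangle _ _ _
    _ ≤ δ + r := add_le_add ((dist_comm (y i) (x i)).trans_le (hxy i)) hxc
    _ = r + δ := add_comm δ r

theorem kCenterCost_le_add_of_dist_le (hz : z < n) {x y : Fin n → M} {H : Finset M}
    (hH : H.Nonempty) {δ : ℝ} (hxy : ∀ i, dist (x i) (y i) ≤ δ) :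
    kCenterCost n z y H ≤ kCenterCost n z x H + δ := by
  simp only [kCenterCost_eq_sInf]
  refine sub_le_iff_le_add.mp (le_csInf (feasibleRadii_nonempty hz x hH) fun r hr ↦ ?_)
  exact sub_le_iff_le_add.mpr
    (csInf_le (bddBelow_feasibleRadii hz y H) (add_mem_feasibleRadii hr hxy))

theorem abs_kCenterCost_sub_le (hz : z < n) {x y : Fin n → M} {H : Finset M}
    (hH : H.Nonempty) {δ : ℝ} (hxy : ∀ i, dist (x i) (y i) ≤ δ) :
    |kCenterCost n z y H - kCenterCost n z x H| ≤ δ := by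
  have hyx : ∀ i, dist (y i) (x i) ≤ δ := fun i ↦ (dist_comm _ _).trans_le (hxy i)
  rw [abs_sub_le_iff]
  constructor
  · linarith [kCenterCost_le_add_of_dist_le hz hH hxy]
  · linarith [kCenterCost_le_add_of_dist_le hz hH hyx]

end KCenter

open KCenter in
theorem perturbed_family_is_coreset_general {M : Type*} [MetricSpace M]
    (n k z : ℕ) (hz : z < n) (μ : ℝ) (hμ0 : 0 < μ)
    (x y : Fin n → M) (ropt : ℝ)
    (hropt : ropt = sInf {r : ℝ | ∃ H : Finset M, H.Nonempty ∧ H.card = k ∧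
        r = kCenterCost n z x H})
    (hxy : ∀ i : Fin n, dist (x i) (y i) ≤ μ * ropt) :
    ∀ H : Finset M, H.Nonempty → H.card = k →
      (1 - μ) * kCenterCost n z x H ≤ kCenterCost n z y H ∧
      kCenterCost n z y H ≤ (1 + μ) * kCenterCost n z x H := by
  intro H hH hHk
  have hropt_le : ropt ≤ kCenterCost n z x H := by
    rw [hropt]
    refine csInf_le ⟨0, ?_⟩ ⟨H, hH, hHk, rfl⟩
    rintro _ ⟨H', -, -, rfl⟩
    exact kCenterCost_nonneg hz x H'
  have herr : |kCenterCost n z y H - kCenterCost n z x H| ≤ μ * kCenterCost n z x H :=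
    (abs_kCenterCost_sub_le hz hH hxy).trans (mul_le_mul_of_nonneg_left hropt_le hμ0.le)
  rw [abs_sub_le_iff] at herr
  constructor <;> linarith

/-- The concluding step of Theorem 7 of the paper: if every point of `x` is moved by at
most `μ·r_opt`, where `r_opt` is the optimal `k`-center-with-`z`-outliers radius of `x`,
then the resulting family `y` is a `μ`-coreset of `x`: for every nonempty center set `H`
of size `k`, `cost_z(y,H) ∈ (1±μ)·cost_z(x,H)`. -/
theorem perturbed_family_is_coreset {M : Type*} [MetricSpace M]
    (n k z : ℕ) (hz : z < n) (hk : 1 ≤ k) (μ : ℝ) (hμ0 : 0 < μ) (hμ1 : μ < 1)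
    (x y : Fin n → M) (ropt : ℝ)
    (hropt : ropt = sInf {r : ℝ | ∃ H : Finset M, H.Nonempty ∧ H.card = k ∧
        r = kCenterCost n z x H})
    (hxy : ∀ i : Fin n, dist (x i) (y i) ≤ μ * ropt) :
    ∀ H : Finset M, H.Nonempty → H.card = k →
      (1 - μ) * kCenterCost n z x H ≤ kCenterCost n z y H ∧
      kCenterCost n z y H ≤ (1 + μ) * kCenterCost n z x H :=
  perturbed_family_is_coreset_general n k z hz μ hμ0 x y ropt hropt hxy
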